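/- Let n ≥ 2 be an integer and λ > 0 a real number, and define r_j^TI := sinh((((n+1)/2) − j)λ) / (sinh(((n+1)/2)λ) − sinh(((n−1)/2)λ)) for 1 ≤ j ≤ n. Then the denominator sinh(((n+1)/2)λ) − sinh(((n−1)/2)λ) is strictly positive, and r^TI is strictly decreasing: r_j^TI > r_k^TI whenever 1 ≤ j < k ≤ n. In particular 1 − r_p^TI + r_q^TI > 0 for any q < p. -/

import Mathlib

open Real Matrix Finset

noncomputable section

/-- Real inverse hyperbolic cosine. -/
def arcosh (x : ℝ) : ℝ := Real.log (x + Real.sqrt (x ^ 2 - 1))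

/-- The no-exception TI rank `r_j^TI`. -/
def rTI (n : ℕ) (l : ℝ) (j : ℕ) : ℝ :=
  Real.sinh ((((n : ℝ) + 1) / 2 - (j : ℝ)) * l) /
    (Real.sinh (((n : ℝ) + 1) / 2 * l) - Real.sinh (((n : ℝ) - 1) / 2 * l))

theorem rTI_denom_pos (n : ℕ) {l : ℝ} (hl : 0 < l) :
    0 < Real.sinh (((n : ℝ) + 1) / 2 * l) - Real.sinh (((n : ℝ) - 1) / 2 * l) :=
  sub_pos.2 <| Real.sinh_lt_sinh.2 <| mul_lt_mul_of_pos_right (by linarith) hl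

theorem rTI_strictAnti (n : ℕ) {l : ℝ} (hl : 0 < l) : StrictAnti (rTI n l) := fun j k hjk =>
  div_lt_div_of_pos_right
    (Real.sinh_lt_sinh.2 <| mul_lt_mul_of_pos_right (by gcongr) hl) (rTI_denom_pos n hl)

theorem rTI_strict_anti_general (n : ℕ) (l : ℝ) (hl : 0 < l) :
    0 < Real.sinh (((n : ℝ) + 1) / 2 * l) - Real.sinh (((n : ℝ) - 1) / 2 * l) ∧
    (∀ j k : ℕ, 1 ≤ j → j < k → k ≤ n → rTI n l k < rTI n l j) ∧
    (∀ p q : ℕ, 1 ≤ q → q < p → p ≤ n → 0 < 1 - rTI n l p + rTI n l q) := by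
  refine ⟨rTI_denom_pos n hl, fun j k _ hjk _ => rTI_strictAnti n hl hjk,
    fun p q _ hqp _ => ?_⟩
  linarith [rTI_strictAnti n hl hqp]

/-- The TI rank has positive denominator, is strictly decreasing, and in
particular `1 − r_p^TI + r_q^TI > 0` for `q < p`. -/
theorem rTI_strict_anti (n : ℕ) (hn : 2 ≤ n) (l : ℝ) (hl : 0 < l) :
    0 < Real.sinh (((n : ℝ) + 1) / 2 * l) - Real.sinh (((n : ℝ) - 1) / 2 * l) ∧
    (∀ j k : ℕ, 1 ≤ j → j < k → k ≤ n → rTI n l k < rTI n l j) ∧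
    (∀ p q : ℕ, 1 ≤ q → q < p → p ≤ n → 0 < 1 - rTI n l p + rTI n l q) :=
  rTI_strict_anti_general n l hl
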